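/- arXiv:1712.03094 — 4 statements merged into one kernel-verified Lean document; each statement's English description precedes it below -/
import Mathlib

section
/- With A₁, A₂ Hurwitz and K₂₁, K₁₂, B₁, B₂ as above, suppose the series P₁ = Σ_{k≥1} P₁^{(k)} and P₂ = Σ_{k≥1} P₂^{(k)} of level-k controllability Gramians converge. Then P₁ and P₂ satisfy the coupled generalized Lyapunov equations A₁ P₁ + P₁ A₁ᵀ + K₂₁ P₂ K₂₁ᵀ + B₁ B₁ᵀ = 0 and A₂ P₂ + P₂ A₂ᵀ + K₁₂ P₁ K₁₂ᵀ + B₂ B₂ᵀ = 0. -/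
open Matrix

/-- A real square matrix is Hurwitz if all its (complex) eigenvalues have
strictly negative real part. -/
def IsHurwitz {n : ℕ} (A : Matrix (Fin n) (Fin n) ℝ) : Prop :=
  ∀ μ ∈ spectrum ℂ (A.map (algebraMap ℝ ℂ)), μ.re < 0


lemma hasSum_mul_left' {a b c : ℕ} (L : Matrix (Fin a) (Fin b) ℝ)
    {f : ℕ → Matrix (Fin b) (Fin c) ℝ} {S : Matrix (Fin b) (Fin c) ℝ}
    (h : HasSum f S) : HasSum (fun k => L * f k) (L * S) :=
  h.map (AddMonoidHom.mk' (fun X : Matrix (Fin b) (Fin c) ℝ => L * X)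
    (fun X Y => Matrix.mul_add L X Y))
    (continuous_const.matrix_mul continuous_id)

lemma hasSum_mul_right' {a b c : ℕ} (R : Matrix (Fin b) (Fin c) ℝ)
    {f : ℕ → Matrix (Fin a) (Fin b) ℝ} {S : Matrix (Fin a) (Fin b) ℝ}
    (h : HasSum f S) : HasSum (fun k => f k * R) (S * R) :=
  h.map (AddMonoidHom.mk' (fun X : Matrix (Fin a) (Fin b) ℝ => X * R)
    (fun X Y => Matrix.add_mul X Y R))
    (continuous_id.matrix_mul continuous_const)

lemma coupled_side {n p q : ℕ}
    (A : Matrix (Fin n) (Fin n) ℝ) (K : Matrix (Fin n) (Fin p) ℝ)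
    (B : Matrix (Fin n) (Fin q) ℝ)
    (P : ℕ → Matrix (Fin n) (Fin n) ℝ) (Q : ℕ → Matrix (Fin p) (Fin p) ℝ)
    (hbase : A * P 1 + P 1 * Aᵀ + B * Bᵀ = 0)
    (hrec : ∀ k ≥ 1, A * P (k + 1) + P (k + 1) * Aᵀ + K * Q k * Kᵀ = 0)
    (S : Matrix (Fin n) (Fin n) ℝ) (T : Matrix (Fin p) (Fin p) ℝ)
    (hS : HasSum (fun k : ℕ => P (k + 1)) S)
    (hT : HasSum (fun k : ℕ => Q (k + 1)) T) :
    A * S + S * Aᵀ + K * T * Kᵀ + B * Bᵀ = 0 := by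
  set f : ℕ → Matrix (Fin n) (Fin n) ℝ :=
    fun k => A * P (k + 1) + P (k + 1) * Aᵀ with hf
  have hL : HasSum f (A * S + S * Aᵀ) :=
    (hasSum_mul_left' A hS).add (hasSum_mul_right' Aᵀ hS)
  have hG : HasSum (fun k => K * Q (k + 1) * Kᵀ) (K * T * Kᵀ) :=
    hasSum_mul_right' Kᵀ (hasSum_mul_left' K hT)
  have hshift : HasSum (fun k => f (k + 1)) (-(K * T * Kᵀ)) := by
    have : (fun k => f (k + 1)) = fun k => -(K * Q (k + 1) * Kᵀ) := by
      funext k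
      have h := hrec (k + 1) (by omega)
      simp only [hf]
      exact eq_neg_of_add_eq_zero_left h
    rw [this]
    exact hG.neg
  have hL' : HasSum f (-(K * T * Kᵀ) + ∑ i ∈ Finset.range 1, f i) :=
    (hasSum_nat_add_iff 1).mp hshift
  have heq : A * S + S * Aᵀ = -(K * T * Kᵀ) + ∑ i ∈ Finset.range 1, f i :=
    hL.unique hL'
  have hf0 : f 0 = -(B * Bᵀ) := by
    simp only [hf]
    exact eq_neg_of_add_eq_zero_left hbase
  simp only [Finset.range_one, Finset.sum_singleton, hf0] at heq
  have : A * S + S * Aᵀ + (K * T * Kᵀ + B * Bᵀ) = 0 := by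
    rw [heq]; abel
  calc A * S + S * Aᵀ + K * T * Kᵀ + B * Bᵀ
      = A * S + S * Aᵀ + (K * T * Kᵀ + B * Bᵀ) := by abel
    _ = 0 := this

/-- If the series `Pq = Σ_{k ≥ 1} Pq^{(k)}` of level-`k` controllability Gramians of a
two-mode linear switched system converge, then their sums satisfy the coupled
generalized Lyapunov equations. -/
theorem coupled_lyapunov_controllability {n₁ n₂ m : ℕ}
    (A₁ : Matrix (Fin n₁) (Fin n₁) ℝ) (A₂ : Matrix (Fin n₂) (Fin n₂) ℝ)
    (hA₁ : IsHurwitz A₁) (hA₂ : IsHurwitz A₂)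
    (K₂₁ : Matrix (Fin n₁) (Fin n₂) ℝ) (K₁₂ : Matrix (Fin n₂) (Fin n₁) ℝ)
    (B₁ : Matrix (Fin n₁) (Fin m) ℝ) (B₂ : Matrix (Fin n₂) (Fin m) ℝ)
    (P₁ : ℕ → Matrix (Fin n₁) (Fin n₁) ℝ) (P₂ : ℕ → Matrix (Fin n₂) (Fin n₂) ℝ)
    (hbase₁ : A₁ * P₁ 1 + P₁ 1 * A₁ᵀ + B₁ * B₁ᵀ = 0)
    (hbase₂ : A₂ * P₂ 1 + P₂ 1 * A₂ᵀ + B₂ * B₂ᵀ = 0)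
    (hrec₁ : ∀ k ≥ 1, A₁ * P₁ (k + 1) + P₁ (k + 1) * A₁ᵀ + K₂₁ * P₂ k * K₂₁ᵀ = 0)
    (hrec₂ : ∀ k ≥ 1, A₂ * P₂ (k + 1) + P₂ (k + 1) * A₂ᵀ + K₁₂ * P₁ k * K₁₂ᵀ = 0)
    (S₁ : Matrix (Fin n₁) (Fin n₁) ℝ) (S₂ : Matrix (Fin n₂) (Fin n₂) ℝ)
    (hS₁ : HasSum (fun k : ℕ => P₁ (k + 1)) S₁)
    (hS₂ : HasSum (fun k : ℕ => P₂ (k + 1)) S₂) :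
    A₁ * S₁ + S₁ * A₁ᵀ + K₂₁ * S₂ * K₂₁ᵀ + B₁ * B₁ᵀ = 0 ∧
    A₂ * S₂ + S₂ * A₂ᵀ + K₁₂ * S₁ * K₁₂ᵀ + B₂ * B₂ᵀ = 0 :=
  ⟨coupled_side A₁ K₂₁ B₁ P₁ P₂ hbase₁ hrec₁ S₁ S₂ hS₁ hS₂,
   coupled_side A₂ K₁₂ B₂ P₂ P₁ hbase₂ hrec₂ S₂ S₁ hS₂ hS₁⟩
end

section
/- Suppose ‖e^{At}‖ ≤ β e^{-αt} for all t ≥ 0 with α, β > 0, and let K be a matrix with ‖K‖ < √(2α)/β. Define the linear map L on n×n matrices by L(X) = ∫₀^∞ e^{At} K X Kᵀ e^{Aᵀt} dt. Then the operator norm of L is strictly less than 1, and consequently the series Σ_{k≥0} L^k(P^{(1)}) converges for any matrix P^{(1)}. -/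
open MeasureTheory Matrix
open scoped Matrix.Norms.L2Operator

/-!
The integrand of `L X` is `B t * X * (B t)ᵀ` with `B t = e^{tA} K`, whose L2 operator norm is at
most `‖B t‖² ‖X‖ ≤ β² ‖K‖² e^{-2αt} ‖X‖`. Integrating over `t > 0` gives
`‖L X‖ ≤ c ‖X‖` with `c = β² ‖K‖² / (2α)`, and `c < 1` is exactly the hypothesis on `‖K‖`.
The iterates then satisfy `‖L^k P₁‖ ≤ c^k ‖P₁‖`, so the series is dominated by a geometric one.
-/

theorem Function.norm_iterate_le_of_norm_le {E : Type*} [SeminormedAddCommGroup E] {f : E → E}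
    {c : ℝ} (hc : 0 ≤ c) (hf : ∀ x, ‖f x‖ ≤ c * ‖x‖) (x : E) (k : ℕ) :
    ‖f^[k] x‖ ≤ c ^ k * ‖x‖ := by
  induction k with
  | zero => simp
  | succ k ih =>
    rw [Function.iterate_succ_apply']
    calc ‖f (f^[k] x)‖ ≤ c * ‖f^[k] x‖ := hf _
      _ ≤ c * (c ^ k * ‖x‖) := by gcongr
      _ = c ^ (k + 1) * ‖x‖ := by ring

theorem Function.summable_iterate_of_norm_le {E : Type*} [NormedAddCommGroup E] [CompleteSpace E]
    {f : E → E} {c : ℝ} (hc₀ : 0 ≤ c) (hc₁ : c < 1) (hf : ∀ x, ‖f x‖ ≤ c * ‖x‖) (x : E) :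
    Summable fun k : ℕ => f^[k] x :=
  .of_norm_bounded ((summable_geometric_of_lt_one hc₀ hc₁).mul_right ‖x‖)
    (Function.norm_iterate_le_of_norm_le hc₀ hf x)

theorem norm_integral_Ioi_le_of_norm_le_mul_exp {E : Type*} [NormedAddCommGroup E]
    [NormedSpace ℝ E] {g : ℝ → E} {C γ : ℝ} (hγ : 0 < γ)
    (hg : ∀ t, 0 < t → ‖g t‖ ≤ C * Real.exp (-γ * t)) :
    ‖∫ t in Set.Ioi 0, g t‖ ≤ C / γ := by
  have hexp : ∫ t in Set.Ioi (0 : ℝ), Real.exp (-γ * t) = 1 / γ := by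
    rw [integral_exp_mul_Ioi (neg_lt_zero.mpr hγ), mul_zero, Real.exp_zero, neg_div_neg_eq]
  calc ‖∫ t in Set.Ioi 0, g t‖ ≤ ∫ t in Set.Ioi 0, C * Real.exp (-γ * t) :=
        norm_integral_le_of_norm_le ((exp_neg_integrableOn_Ioi 0 hγ).const_mul C)
          ((ae_restrict_iff' measurableSet_Ioi).mpr (.of_forall hg))
    _ = C / γ := by rw [integral_const_mul, hexp, mul_one_div]

namespace Matrix

variable {m n : Type*} [Fintype m] [Fintype n] [DecidableEq m] [DecidableEq n]

theorem l2_opNorm_transpose (A : Matrix m n ℝ) : ‖Aᵀ‖ = ‖A‖ := by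
  rw [← conjTranspose_eq_transpose_of_trivial, l2_opNorm_conjTranspose]

theorem l2_opNorm_mul_mul_transpose_le (B : Matrix m n ℝ) (X : Matrix n n ℝ) :
    ‖B * X * Bᵀ‖ ≤ ‖B‖ ^ 2 * ‖X‖ :=
  calc ‖B * X * Bᵀ‖ ≤ ‖B‖ * ‖X‖ * ‖Bᵀ‖ :=
        (l2_opNorm_mul _ _).trans (by gcongr; exact l2_opNorm_mul _ _)
    _ = ‖B‖ ^ 2 * ‖X‖ := by rw [l2_opNorm_transpose]; ring

theorem norm_integral_exp_mul_mul_transpose_exp_le {A : Matrix n n ℝ} {α β : ℝ} (hα : 0 < α)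
    (hbound : ∀ t : ℝ, 0 ≤ t → ‖NormedSpace.exp (t • A)‖ ≤ β * Real.exp (-α * t))
    (K X : Matrix n n ℝ) :
    ‖∫ t in Set.Ioi (0 : ℝ),
        NormedSpace.exp (t • A) * K * X * Kᵀ * NormedSpace.exp (t • Aᵀ)‖ ≤
      β ^ 2 * ‖K‖ ^ 2 / (2 * α) * ‖X‖ := by
  refine (norm_integral_Ioi_le_of_norm_le_mul_exp (C := β ^ 2 * ‖K‖ ^ 2 * ‖X‖) (γ := 2 * α)
    (by positivity) fun t ht => ?_).trans_eq (by ring)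
  have hB : NormedSpace.exp (t • A) * K * X * Kᵀ * NormedSpace.exp (t • Aᵀ) =
      (NormedSpace.exp (t • A) * K) * X * (NormedSpace.exp (t • A) * K)ᵀ := by
    rw [← transpose_smul, exp_transpose, transpose_mul]
    simp only [Matrix.mul_assoc]
  have hexp : ‖NormedSpace.exp (t • A)‖ ^ 2 ≤ β ^ 2 * Real.exp (-(2 * α) * t) := by
    calc ‖NormedSpace.exp (t • A)‖ ^ 2 ≤ (β * Real.exp (-α * t)) ^ 2 :=
          pow_le_pow_left₀ (norm_nonneg _) (hbound t ht.le) 2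
      _ = β ^ 2 * Real.exp (-(2 * α) * t) := by rw [mul_pow, ← Real.exp_nat_mul]; ring_nf
  calc _ = ‖(NormedSpace.exp (t • A) * K) * X * (NormedSpace.exp (t • A) * K)ᵀ‖ := by rw [hB]
    _ ≤ ‖NormedSpace.exp (t • A) * K‖ ^ 2 * ‖X‖ := l2_opNorm_mul_mul_transpose_le _ _
    _ ≤ (‖NormedSpace.exp (t • A)‖ * ‖K‖) ^ 2 * ‖X‖ := by gcongr; exact l2_opNorm_mul _ _
    _ ≤ β ^ 2 * Real.exp (-(2 * α) * t) * ‖K‖ ^ 2 * ‖X‖ := by rw [mul_pow]; gcongr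
    _ = β ^ 2 * ‖K‖ ^ 2 * ‖X‖ * Real.exp (-(2 * α) * t) := by ring

end Matrix

/-- If `‖e^{At}‖ ≤ β e^{-αt}` for `t ≥ 0` and `‖K‖ < √(2α)/β`, then the linear map
`L(X) = ∫₀^∞ e^{At} K X Kᵀ e^{Aᵀt} dt` on `n × n` matrices is a contraction (its operator
norm is strictly less than one), and consequently the series `Σ_{k≥0} L^k(P⁽¹⁾)`
converges for any matrix `P⁽¹⁾`. -/
theorem switched_gramian_map_contraction {n : ℕ}
    (A K : Matrix (Fin n) (Fin n) ℝ) (α β : ℝ) (hα : 0 < α) (hβ : 0 < β)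
    (hbound : ∀ t : ℝ, 0 ≤ t →
      ‖NormedSpace.exp (t • A)‖ ≤ β * Real.exp (-α * t))
    (hK : ‖K‖ < Real.sqrt (2 * α) / β)
    (L : Matrix (Fin n) (Fin n) ℝ → Matrix (Fin n) (Fin n) ℝ)
    (hL : ∀ X, L X = ∫ t in Set.Ioi (0:ℝ),
        NormedSpace.exp (t • A) * K * X * Kᵀ * NormedSpace.exp (t • Aᵀ)) :
    (∃ c : ℝ, 0 ≤ c ∧ c < 1 ∧ ∀ X, ‖L X‖ ≤ c * ‖X‖) ∧
    ∀ P₁ : Matrix (Fin n) (Fin n) ℝ, Summable (fun k : ℕ => L^[k] P₁) := by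
  set c := β ^ 2 * ‖K‖ ^ 2 / (2 * α)
  have hc₀ : 0 ≤ c := by positivity
  have hc₁ : c < 1 := by
    have hβK : β * ‖K‖ < Real.sqrt (2 * α) := by rwa [lt_div_iff₀' hβ] at hK
    have hsq : (β * ‖K‖) ^ 2 < 2 * α :=
      calc (β * ‖K‖) ^ 2 < Real.sqrt (2 * α) ^ 2 := pow_lt_pow_left₀ hβK (by positivity) two_ne_zero
        _ = 2 * α := Real.sq_sqrt (by positivity)
    rw [div_lt_one (by positivity)]
    linarith [mul_pow β ‖K‖ 2]
  have hLc : ∀ X, ‖L X‖ ≤ c * ‖X‖ := fun X => by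
    rw [hL]; exact norm_integral_exp_mul_mul_transpose_exp_le hα hbound K X
  exact ⟨⟨c, hc₀, hc₁, hLc⟩, Function.summable_iterate_of_norm_le hc₀ hc₁ hLc⟩
end

section
/- Under the conditions ‖e^{A_D t}‖ ≤ β e^{-αt} and max(‖K₁₂‖, ‖K₂₁‖) < √(2α)/β, the series P_q = Σ_{k≥1} P_q^{(k)} of level-k controllability Gramians (each positive semidefinite) converges absolutely for q ∈ {1,2}. -/
/-!
Each level of the recursion is a Lyapunov-type integral `∫₀^∞ e^{tA} K P Kᵀ e^{tAᵀ} dt`. The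
diagonal blocks `e^{tA_q}` of `e^{tA_D}` inherit the decay `β e^{-αt}`, so such an integral has
norm at most `r ‖P‖` with `r = β² max(‖K₁₂‖, ‖K₂₁‖)² / (2α)`, and the smallness of the coupling is
exactly `r < 1`. The norms of the two families thus bound each other with ratio `r`, so their
pointwise maximum decays geometrically.
-/

open MeasureTheory Matrix
open scoped Matrix.Norms.L2Operator

variable {l m n o X R : Type*} in
theorem HasSum.matrix_fromBlocks [AddCommMonoid R] [TopologicalSpace R]
    {f : X → Matrix n l R} {g : X → Matrix n m R} {h : X → Matrix o l R} {k : X → Matrix o m R}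
    {a : Matrix n l R} {b : Matrix n m R} {c : Matrix o l R} {d : Matrix o m R}
    (hf : HasSum f a) (hg : HasSum g b) (hh : HasSum h c) (hk : HasSum k d) :
    HasSum (fun x => fromBlocks (f x) (g x) (h x) (k x)) (fromBlocks a b c d) := by
  refine Pi.hasSum.2 fun i => Pi.hasSum.2 fun j => ?_
  rcases i with i | i <;> rcases j with j | j
  · exact Pi.hasSum.1 (Pi.hasSum.1 hf i) j
  · exact Pi.hasSum.1 (Pi.hasSum.1 hg i) j
  · exact Pi.hasSum.1 (Pi.hasSum.1 hh i) j
  · exact Pi.hasSum.1 (Pi.hasSum.1 hk i) j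

namespace Matrix

variable {𝕜 : Type*} [RCLike 𝕜] {l m n p : Type*} [Fintype l] [Fintype m] [Fintype n] [Fintype p]
  [DecidableEq l] [DecidableEq m] [DecidableEq n] [DecidableEq p]

theorem exp_fromBlocks_diagonal (A : Matrix m m 𝕜) (D : Matrix n n 𝕜) :
    NormedSpace.exp (fromBlocks A 0 0 D)
      = fromBlocks (NormedSpace.exp A) 0 0 (NormedSpace.exp D) := by
  have hblocks := (NormedSpace.exp_series_hasSum_exp' (𝕂 := 𝕜) A).matrix_fromBlocks hasSum_zero
    hasSum_zero (NormedSpace.exp_series_hasSum_exp' (𝕂 := 𝕜) D)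
  refine (NormedSpace.exp_series_hasSum_exp' (𝕂 := 𝕜) (fromBlocks A 0 0 D)).unique ?_
  simpa only [fromBlocks_diagonal_pow, fromBlocks_smul, smul_zero] using hblocks

-- `R Rᴴ = 1`, so the C⋆-identity gives `‖R‖² = ‖1‖ ≤ 1`.
lemma l2_opNorm_one_submatrix_le_one {f : l → m} (hf : Function.Injective f) :
    ‖(1 : Matrix m m 𝕜).submatrix f id‖ ≤ 1 := by
  set R := (1 : Matrix m m 𝕜).submatrix f id
  have hRR : R * Rᴴ = 1 := by
    rw [conjTranspose_submatrix, conjTranspose_one,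
      ← submatrix_mul _ _ _ _ _ Function.bijective_id, Matrix.mul_one, submatrix_one _ hf]
  have hsq : ‖R‖ * ‖R‖ ≤ 1 := by
    rw [← l2_opNorm_conjTranspose R, ← l2_opNorm_conjTranspose_mul_self,
      conjTranspose_conjTranspose, hRR, ← diagonal_one, l2_opNorm_diagonal]
    exact pi_norm_le_iff_of_nonneg zero_le_one |>.2 fun _ => norm_one.le
  nlinarith [norm_nonneg R]

lemma l2_opNorm_submatrix_le (A : Matrix m n 𝕜) {f : l → m} {g : p → n}
    (hf : Function.Injective f) (hg : Function.Injective g) : ‖A.submatrix f g‖ ≤ ‖A‖ := by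
  set R := (1 : Matrix m m 𝕜).submatrix f id
  set S := (1 : Matrix n n 𝕜).submatrix g id
  have hA : A.submatrix f g = R * A * Sᴴ := by
    ext i j
    simp [R, S, mul_apply, one_apply]
  calc ‖A.submatrix f g‖ ≤ ‖R‖ * ‖A‖ * ‖Sᴴ‖ := by
        rw [hA]; exact (l2_opNorm_mul _ _).trans (by gcongr; exact l2_opNorm_mul _ _)
    _ ≤ 1 * ‖A‖ * 1 := by
        rw [l2_opNorm_conjTranspose]
        gcongr
        · exact l2_opNorm_one_submatrix_le_one hf
        · exact l2_opNorm_one_submatrix_le_one hg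
    _ = ‖A‖ := by ring

lemma l2_opNorm_mul_mul_conjTranspose_le (X : Matrix m n 𝕜) (M : Matrix n n 𝕜) :
    ‖X * M * Xᴴ‖ ≤ ‖X‖ ^ 2 * ‖M‖ :=
  calc ‖X * M * Xᴴ‖ ≤ ‖X‖ * ‖M‖ * ‖Xᴴ‖ :=
        (l2_opNorm_mul _ _).trans (by gcongr; exact l2_opNorm_mul _ _)
    _ = ‖X‖ ^ 2 * ‖M‖ := by rw [l2_opNorm_conjTranspose]; ring

lemma l2_opNorm_le_fromBlocks₁₁ (A : Matrix l n 𝕜) (B : Matrix l p 𝕜) (C : Matrix m n 𝕜)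
    (D : Matrix m p 𝕜) : ‖A‖ ≤ ‖fromBlocks A B C D‖ :=
  calc ‖A‖ = ‖(fromBlocks A B C D).submatrix Sum.inl Sum.inl‖ := rfl
    _ ≤ _ := l2_opNorm_submatrix_le _ Sum.inl_injective Sum.inl_injective

lemma l2_opNorm_le_fromBlocks₂₂ (A : Matrix l n 𝕜) (B : Matrix l p 𝕜) (C : Matrix m n 𝕜)
    (D : Matrix m p 𝕜) : ‖D‖ ≤ ‖fromBlocks A B C D‖ :=
  calc ‖D‖ = ‖(fromBlocks A B C D).submatrix Sum.inr Sum.inr‖ := rfl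
    _ ≤ _ := l2_opNorm_submatrix_le _ Sum.inr_injective Sum.inr_injective

end Matrix

variable {n p : Type*} [Fintype n] [DecidableEq n] [Fintype p] [DecidableEq p]

lemma norm_integral_exp_mul_mul_exp_transpose_le (A : Matrix n n ℝ) (K : Matrix n p ℝ)
    (M : Matrix p p ℝ) {α β : ℝ} (hα : 0 < α)
    (hA : ∀ t : ℝ, 0 ≤ t → ‖NormedSpace.exp (t • A)‖ ≤ β * Real.exp (-α * t)) :
    ‖∫ t in Set.Ioi (0:ℝ), NormedSpace.exp (t • A) * K * M * Kᵀ * NormedSpace.exp (t • Aᵀ)‖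
      ≤ β ^ 2 * ‖K‖ ^ 2 / (2 * α) * ‖M‖ := by
  set C := β ^ 2 * ‖K‖ ^ 2 * ‖M‖
  have hbound : ∀ᵐ t ∂(volume.restrict (Set.Ioi (0:ℝ))),
      ‖NormedSpace.exp (t • A) * K * M * Kᵀ * NormedSpace.exp (t • Aᵀ)‖
        ≤ C * Real.exp (-(2 * α) * t) := by
    filter_upwards [ae_restrict_mem measurableSet_Ioi] with t ht
    set E := NormedSpace.exp (t • A)
    have hsandwich : E * K * M * Kᵀ * NormedSpace.exp (t • Aᵀ) = (E * K) * M * (E * K)ᴴ := by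
      rw [← transpose_smul, exp_transpose, conjTranspose_eq_transpose_of_trivial, transpose_mul,
        Matrix.mul_assoc (E * K * M)]
    have hEK : ‖E * K‖ ≤ β * Real.exp (-α * t) * ‖K‖ :=
      (l2_opNorm_mul E K).trans (by gcongr; exact hA t (le_of_lt ht))
    calc _ = ‖(E * K) * M * (E * K)ᴴ‖ := by rw [hsandwich]
      _ ≤ ‖E * K‖ ^ 2 * ‖M‖ := l2_opNorm_mul_mul_conjTranspose_le _ _
      _ ≤ (β * Real.exp (-α * t) * ‖K‖) ^ 2 * ‖M‖ := by gcongr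
      _ = C * Real.exp (-(2 * α) * t) := by
        rw [show -(2 * α) * t = -α * t + -α * t by ring, Real.exp_add]
        simp only [C]
        ring
  have hint : Integrable (fun t : ℝ => C * Real.exp (-(2 * α) * t))
      (volume.restrict (Set.Ioi (0:ℝ))) :=
    (exp_neg_integrableOn_Ioi 0 (by positivity)).const_mul C
  calc _ ≤ ∫ t in Set.Ioi (0:ℝ), C * Real.exp (-(2 * α) * t) :=
        norm_integral_le_of_norm_le hint hbound
    _ = β ^ 2 * ‖K‖ ^ 2 / (2 * α) * ‖M‖ := by
      rw [integral_const_mul, integral_exp_mul_Ioi (by linarith)]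
      field_simp
      simp [C]

lemma summable_and_summable_of_le_mul_swap {a b : ℕ → ℝ} {r : ℝ} (hr₀ : 0 ≤ r) (hr : r < 1)
    (ha : ∀ k, 0 ≤ a k) (hb : ∀ k, 0 ≤ b k)
    (hab : ∀ k, a (k + 1) ≤ r * b k) (hba : ∀ k, b (k + 1) ≤ r * a k) :
    Summable a ∧ Summable b := by
  have hmax : Summable fun k => max (a k) (b k) := by
    refine summable_of_ratio_norm_eventually_le hr (Filter.Eventually.of_forall fun k => ?_)
    rw [Real.norm_of_nonneg ((ha _).trans (le_max_left _ _)),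
      Real.norm_of_nonneg ((ha _).trans (le_max_left _ _))]
    exact max_le ((hab k).trans (by gcongr; exact le_max_right _ _))
      ((hba k).trans (by gcongr; exact le_max_left _ _))
  exact ⟨hmax.of_nonneg_of_le ha fun k => le_max_left _ _,
    hmax.of_nonneg_of_le hb fun k => le_max_right _ _⟩

theorem level_k_gramian_series_summable_general {n₁ n₂ : ℕ}
    (A₁ : Matrix (Fin n₁) (Fin n₁) ℝ) (A₂ : Matrix (Fin n₂) (Fin n₂) ℝ)
    (K₂₁ : Matrix (Fin n₁) (Fin n₂) ℝ) (K₁₂ : Matrix (Fin n₂) (Fin n₁) ℝ)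
    (α β : ℝ) (hα : 0 < α) (hβ : 0 < β)
    (hbound : ∀ t : ℝ, 0 ≤ t →
      ‖NormedSpace.exp (t • Matrix.fromBlocks A₁ 0 0 A₂)‖ ≤ β * Real.exp (-α * t))
    (hK : max ‖K₁₂‖ ‖K₂₁‖ < Real.sqrt (2 * α) / β)
    (P₁ : ℕ → Matrix (Fin n₁) (Fin n₁) ℝ) (P₂ : ℕ → Matrix (Fin n₂) (Fin n₂) ℝ)
    (hrec₁ : ∀ k ≥ 1, P₁ (k + 1) = ∫ t in Set.Ioi (0:ℝ),
        NormedSpace.exp (t • A₁) * K₂₁ * P₂ k * K₂₁ᵀ * NormedSpace.exp (t • A₁ᵀ))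
    (hrec₂ : ∀ k ≥ 1, P₂ (k + 1) = ∫ t in Set.Ioi (0:ℝ),
        NormedSpace.exp (t • A₂) * K₁₂ * P₁ k * K₁₂ᵀ * NormedSpace.exp (t • A₂ᵀ)) :
    Summable (fun k : ℕ => ‖P₁ (k + 1)‖) ∧ Summable (fun k : ℕ => ‖P₂ (k + 1)‖) := by
  have hr : β ^ 2 * max ‖K₁₂‖ ‖K₂₁‖ ^ 2 / (2 * α) < 1 := by
    have hcβ := (Real.lt_sqrt (by positivity)).1 ((lt_div_iff₀ hβ).1 hK)
    rw [div_lt_one (by positivity)]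
    linarith
  have hexp (t : ℝ) : NormedSpace.exp (t • fromBlocks A₁ 0 0 A₂)
      = fromBlocks (NormedSpace.exp (t • A₁)) 0 0 (NormedSpace.exp (t • A₂)) := by
    rw [fromBlocks_smul, smul_zero, smul_zero, exp_fromBlocks_diagonal]
  have hE₁ (t : ℝ) (ht : 0 ≤ t) : ‖NormedSpace.exp (t • A₁)‖ ≤ β * Real.exp (-α * t) :=
    (l2_opNorm_le_fromBlocks₁₁ _ 0 0 _).trans (hexp t ▸ hbound t ht)
  have hE₂ (t : ℝ) (ht : 0 ≤ t) : ‖NormedSpace.exp (t • A₂)‖ ≤ β * Real.exp (-α * t) :=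
    (l2_opNorm_le_fromBlocks₂₂ _ 0 0 _).trans (hexp t ▸ hbound t ht)
  refine summable_and_summable_of_le_mul_swap (by positivity) hr (fun _ => norm_nonneg _)
    (fun _ => norm_nonneg _) (fun k => ?_) (fun k => ?_)
  · rw [hrec₁ (k + 1) le_add_self]
    refine (norm_integral_exp_mul_mul_exp_transpose_le A₁ K₂₁ _ hα hE₁).trans ?_
    gcongr
    exact le_max_right _ _
  · rw [hrec₂ (k + 1) le_add_self]
    refine (norm_integral_exp_mul_mul_exp_transpose_le A₂ K₁₂ _ hα hE₂).trans ?_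
    gcongr
    exact le_max_left _ _

/-- Under the stability bound `‖e^{A_D t}‖ ≤ β e^{-α t}` on the block-diagonal matrix
`A_D = blkdiag(A₁, A₂)` and the smallness condition `max(‖K₁₂‖, ‖K₂₁‖) < √(2α)/β` on the
coupling matrices, the series `P_q = Σ_{k ≥ 1} P_q^{(k)}` of level-`k` controllability
Gramians (each positive semidefinite) converge absolutely for `q ∈ {1, 2}`. -/
theorem level_k_gramian_series_summable {n₁ n₂ m : ℕ}
    (A₁ : Matrix (Fin n₁) (Fin n₁) ℝ) (A₂ : Matrix (Fin n₂) (Fin n₂) ℝ)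
    (K₂₁ : Matrix (Fin n₁) (Fin n₂) ℝ) (K₁₂ : Matrix (Fin n₂) (Fin n₁) ℝ)
    (B₁ : Matrix (Fin n₁) (Fin m) ℝ) (B₂ : Matrix (Fin n₂) (Fin m) ℝ)
    (α β : ℝ) (hα : 0 < α) (hβ : 0 < β)
    (hbound : ∀ t : ℝ, 0 ≤ t →
      ‖NormedSpace.exp (t • Matrix.fromBlocks A₁ 0 0 A₂)‖ ≤ β * Real.exp (-α * t))
    (hK : max ‖K₁₂‖ ‖K₂₁‖ < Real.sqrt (2 * α) / β)
    (P₁ : ℕ → Matrix (Fin n₁) (Fin n₁) ℝ) (P₂ : ℕ → Matrix (Fin n₂) (Fin n₂) ℝ)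
    (hpsd₁ : ∀ k, (P₁ k).PosSemidef) (hpsd₂ : ∀ k, (P₂ k).PosSemidef)
    (hbase₁ : P₁ 1 = ∫ t in Set.Ioi (0:ℝ),
        NormedSpace.exp (t • A₁) * B₁ * B₁ᵀ * NormedSpace.exp (t • A₁ᵀ))
    (hbase₂ : P₂ 1 = ∫ t in Set.Ioi (0:ℝ),
        NormedSpace.exp (t • A₂) * B₂ * B₂ᵀ * NormedSpace.exp (t • A₂ᵀ))
    (hrec₁ : ∀ k ≥ 1, P₁ (k + 1) = ∫ t in Set.Ioi (0:ℝ),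
        NormedSpace.exp (t • A₁) * K₂₁ * P₂ k * K₂₁ᵀ * NormedSpace.exp (t • A₁ᵀ))
    (hrec₂ : ∀ k ≥ 1, P₂ (k + 1) = ∫ t in Set.Ioi (0:ℝ),
        NormedSpace.exp (t • A₂) * K₁₂ * P₁ k * K₁₂ᵀ * NormedSpace.exp (t • A₂ᵀ)) :
    Summable (fun k : ℕ => ‖P₁ (k + 1)‖) ∧ Summable (fun k : ℕ => ‖P₂ (k + 1)‖) :=
  level_k_gramian_series_summable_general A₁ A₂ K₂₁ K₁₂ α β hα hβ hbound hK P₁ P₂ hrec₁ hrec₂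
end

section
/- Let A₁, A₂ be Hurwitz, and let P₁, P₂ and Q₁, Q₂ be symmetric positive semidefinite matrices satisfying the coupled controllability equations A₁P₁+P₁A₁ᵀ+K₂₁P₂K₂₁ᵀ+B₁B₁ᵀ=0, A₂P₂+P₂A₂ᵀ+K₁₂P₁K₁₂ᵀ+B₂B₂ᵀ=0 and the coupled observability equations A₁ᵀQ₁+Q₁A₁+K₁₂ᵀQ₂K₁₂+C₁ᵀC₁=0, A₂ᵀQ₂+Q₂A₂+K₂₁ᵀQ₁K₂₁+C₂ᵀC₂=0. Then trace(C₁P₁C₁ᵀ) + trace(C₂P₂C₂ᵀ) = trace(B₁ᵀQ₁B₁) + trace(B₂ᵀQ₂B₂). -/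
open Matrix

/-- Equality of the controllability-based and the observability-based expressions for the
squared `H₂` norm of a two-mode linear switched system:
`trace(C₁P₁C₁ᵀ) + trace(C₂P₂C₂ᵀ) = trace(B₁ᵀQ₁B₁) + trace(B₂ᵀQ₂B₂)`. -/
theorem h2_norm_controllability_eq_observability {n₁ n₂ m p : ℕ}
    (A₁ : Matrix (Fin n₁) (Fin n₁) ℝ) (A₂ : Matrix (Fin n₂) (Fin n₂) ℝ)
    (hA₁ : IsHurwitz A₁) (hA₂ : IsHurwitz A₂)
    (K₂₁ : Matrix (Fin n₁) (Fin n₂) ℝ) (K₁₂ : Matrix (Fin n₂) (Fin n₁) ℝ)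
    (B₁ : Matrix (Fin n₁) (Fin m) ℝ) (B₂ : Matrix (Fin n₂) (Fin m) ℝ)
    (C₁ : Matrix (Fin p) (Fin n₁) ℝ) (C₂ : Matrix (Fin p) (Fin n₂) ℝ)
    (P₁ Q₁ : Matrix (Fin n₁) (Fin n₁) ℝ) (P₂ Q₂ : Matrix (Fin n₂) (Fin n₂) ℝ)
    (hP₁ : P₁.PosSemidef) (hP₂ : P₂.PosSemidef)
    (hQ₁ : Q₁.PosSemidef) (hQ₂ : Q₂.PosSemidef)
    (heqP₁ : A₁ * P₁ + P₁ * A₁ᵀ + K₂₁ * P₂ * K₂₁ᵀ + B₁ * B₁ᵀ = 0)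
    (heqP₂ : A₂ * P₂ + P₂ * A₂ᵀ + K₁₂ * P₁ * K₁₂ᵀ + B₂ * B₂ᵀ = 0)
    (heqQ₁ : A₁ᵀ * Q₁ + Q₁ * A₁ + K₁₂ᵀ * Q₂ * K₁₂ + C₁ᵀ * C₁ = 0)
    (heqQ₂ : A₂ᵀ * Q₂ + Q₂ * A₂ + K₂₁ᵀ * Q₁ * K₂₁ + C₂ᵀ * C₂ = 0) :
    (C₁ * P₁ * C₁ᵀ).trace + (C₂ * P₂ * C₂ᵀ).trace
      = (B₁ᵀ * Q₁ * B₁).trace + (B₂ᵀ * Q₂ * B₂).trace := by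

  -- Multiply observability equations by P on the right and take trace
  have h1 := congrArg (fun M => (M * P₁).trace) heqQ₁
  have h2 := congrArg (fun M => (M * P₂).trace) heqQ₂
  -- Multiply controllability equations by Q on the left and take trace
  have h3 := congrArg (fun M => (Q₁ * M).trace) heqP₁
  have h4 := congrArg (fun M => (Q₂ * M).trace) heqP₂
  simp only [add_mul, mul_add, Matrix.trace_add, Matrix.zero_mul, Matrix.mul_zero,
    Matrix.trace_zero] at h1 h2 h3 h4
  -- rewrite the goal terms as traces against the Lyapunov data
  have c1 : (C₁ * P₁ * C₁ᵀ).trace = (C₁ᵀ * C₁ * P₁).trace := by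
    rw [Matrix.trace_mul_comm, ← Matrix.mul_assoc]
  have c2 : (C₂ * P₂ * C₂ᵀ).trace = (C₂ᵀ * C₂ * P₂).trace := by
    rw [Matrix.trace_mul_comm, ← Matrix.mul_assoc]
  have b1 : (B₁ᵀ * Q₁ * B₁).trace = (Q₁ * (B₁ * B₁ᵀ)).trace := by
    rw [Matrix.trace_mul_comm, ← Matrix.mul_assoc, Matrix.trace_mul_comm]
  have b2 : (B₂ᵀ * Q₂ * B₂).trace = (Q₂ * (B₂ * B₂ᵀ)).trace := by
    rw [Matrix.trace_mul_comm, ← Matrix.mul_assoc, Matrix.trace_mul_comm]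
  rw [c1, c2, b1, b2]
  -- cyclic identities matching cross terms
  have t1 : (A₁ᵀ * Q₁ * P₁).trace = (Q₁ * (P₁ * A₁ᵀ)).trace := by
    rw [Matrix.trace_mul_comm, ← Matrix.mul_assoc, Matrix.trace_mul_comm]
  have t2 : (Q₁ * A₁ * P₁).trace = (Q₁ * (A₁ * P₁)).trace := by
    rw [Matrix.mul_assoc]
  have t3 : (K₁₂ᵀ * Q₂ * K₁₂ * P₁).trace = (Q₂ * (K₁₂ * P₁ * K₁₂ᵀ)).trace := by
    rw [Matrix.mul_assoc (K₁₂ᵀ * Q₂) K₁₂ P₁, Matrix.trace_mul_comm,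
      ← Matrix.mul_assoc (K₁₂ * P₁) K₁₂ᵀ Q₂, Matrix.trace_mul_comm]
  have t4 : (A₂ᵀ * Q₂ * P₂).trace = (Q₂ * (P₂ * A₂ᵀ)).trace := by
    rw [Matrix.trace_mul_comm, ← Matrix.mul_assoc, Matrix.trace_mul_comm]
  have t5 : (Q₂ * A₂ * P₂).trace = (Q₂ * (A₂ * P₂)).trace := by
    rw [Matrix.mul_assoc]
  have t6 : (K₂₁ᵀ * Q₁ * K₂₁ * P₂).trace = (Q₁ * (K₂₁ * P₂ * K₂₁ᵀ)).trace := by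
    rw [Matrix.mul_assoc (K₂₁ᵀ * Q₁) K₂₁ P₂, Matrix.trace_mul_comm,
      ← Matrix.mul_assoc (K₂₁ * P₂) K₂₁ᵀ Q₁, Matrix.trace_mul_comm]
  linarith [h1, h2, h3, h4, t1, t2, t3, t4, t5, t6]
end
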